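/- Let K be a field, L/K a finite field extension, and C a K-linear abelian category. If the base change category C_L has enough injectives (every object admits a monomorphism into an injective object), then C has enough injectives. -/

import Mathlib

open CategoryTheory CategoryTheory.Limits

universe v u

variable (K : Type*) [Field K] (L : Type*) [Field L] [Algebra K L]
variable (C : Type u) [Category.{v} C] [Abelian C] [Linear K C]

structure BaseChange where
  obj : C
  str : L →ₐ[K] End obj

namespace BaseChange

variable {K L C}

@[ext]
structure Hom (X Y : BaseChange K L C) where
  hom : X.obj ⟶ Y.obj
  comm : ∀ l : L, X.str l ≫ hom = hom ≫ Y.str l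

instance : Category (BaseChange K L C) where
  Hom X Y := Hom X Y
  id X := ⟨𝟙 X.obj, fun l => by simp⟩
  comp {X Y Z} f g := ⟨f.hom ≫ g.hom, fun l => by
    rw [← Category.assoc, f.comm, Category.assoc, g.comm, Category.assoc]⟩

@[ext]
lemma hom_ext {X Y : BaseChange K L C} {f g : X ⟶ Y} (h : f.hom = g.hom) : f = g :=
  Hom.ext h

@[simp] lemma id_hom (X : BaseChange K L C) : Hom.hom (𝟙 X) = 𝟙 X.obj := rfl

@[simp] lemma comp_hom {X Y Z : BaseChange K L C} (f : X ⟶ Y) (g : Y ⟶ Z) :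
    (f ≫ g).hom = f.hom ≫ g.hom := rfl

section Preadditive

variable {X Y : BaseChange K L C}

instance : Zero (X ⟶ Y) := ⟨⟨0, fun l => by simp⟩⟩
instance : Add (X ⟶ Y) :=
  ⟨fun f g => ⟨f.hom + g.hom, fun l => by
    simp [Preadditive.comp_add, Preadditive.add_comp, f.comm, g.comm]⟩⟩
instance : Neg (X ⟶ Y) :=
  ⟨fun f => ⟨-f.hom, fun l => by simp [f.comm]⟩⟩
instance : Sub (X ⟶ Y) :=
  ⟨fun f g => ⟨f.hom - g.hom, fun l => by
    simp [Preadditive.comp_sub, Preadditive.sub_comp, f.comm, g.comm]⟩⟩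
instance : SMul ℕ (X ⟶ Y) :=
  ⟨fun n f => ⟨n • f.hom, fun l => by simp [f.comm]⟩⟩
instance : SMul ℤ (X ⟶ Y) :=
  ⟨fun n f => ⟨n • f.hom, fun l => by simp [f.comm]⟩⟩

@[simp] lemma zero_hom : (0 : X ⟶ Y).hom = 0 := rfl
@[simp] lemma add_hom (f g : X ⟶ Y) : (f + g).hom = f.hom + g.hom := rfl
@[simp] lemma neg_hom (f : X ⟶ Y) : (-f).hom = -f.hom := rfl
@[simp] lemma sub_hom (f g : X ⟶ Y) : (f - g).hom = f.hom - g.hom := rfl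

instance : AddCommGroup (X ⟶ Y) :=
  Function.Injective.addCommGroup (Hom.hom : (X ⟶ Y) → (X.obj ⟶ Y.obj))
    (fun _ _ h => Hom.ext h) rfl (fun _ _ => rfl) (fun _ => rfl) (fun _ _ => rfl)
    (fun _ _ => rfl) (fun _ _ => rfl)

instance : Preadditive (BaseChange K L C) where
  add_comp _ _ _ f f' g := by apply hom_ext; simp [Preadditive.add_comp]
  comp_add _ _ _ f g g' := by apply hom_ext; simp [Preadditive.comp_add]

end Preadditive

end BaseChange

open BaseChange

/-!
Extension of scalars `X ↦ X ⊗_K L` is realised as `X^{⊕ n}`, with `L` acting through its left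
regular representation in a `K`-basis of `L`; it is left adjoint to the forgetful functor
`C_L ⥤ C`. It preserves monomorphisms, and its unit `X ⟶ X ⊗_K L` is a split monomorphism since
`K` is a direct summand of `L`, so it also reflects them. Hence a monomorphism `X ⊗_K L ⟶ J` into
an injective object of `C_L` yields a monomorphism `X ⟶ J` into an object injective in `C`.
-/

open scoped Matrix

section MatrixAction

variable {R : Type*} {C : Type*} [Category* C] [Preadditive C] [HasFiniteBiproducts C]
  {ι : Type} [Fintype ι]

noncomputable def vectorHom [Semiring R] [Linear R C] (X : C) (v : ι → R) :
    X ⟶ ⨁ fun _ : ι => X :=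
  biproduct.lift fun j => v j • 𝟙 X

lemma vectorHom_comp_desc [Semiring R] [Linear R C] {X Y : C} (v : ι → R)
    (f : ι → (X ⟶ Y)) : vectorHom X v ≫ biproduct.desc f = ∑ i, v i • f i := by
  simp [vectorHom, biproduct.lift_desc]

lemma isSplitMono_vectorHom [DivisionRing R] [Linear R C] (X : C) {v : ι → R} (hv : v ≠ 0) :
    IsSplitMono (vectorHom X v) := by
  obtain ⟨j, hj⟩ := Function.ne_iff.mp hv
  refine IsSplitMono.mk' ⟨biproduct.π _ j ≫ ((v j)⁻¹ • 𝟙 X), ?_⟩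
  simp [vectorHom, smul_smul, inv_mul_cancel₀ hj]

variable [DecidableEq ι]

lemma vectorHom_single [Semiring R] [Linear R C] (X : C) (i : ι) :
    vectorHom X (Pi.single i (1 : R)) = biproduct.ι (fun _ : ι => X) i := by
  refine biproduct.hom_ext _ _ fun j => ?_
  by_cases h : i = j
  · subst h; simp [vectorHom]
  · simp [vectorHom, biproduct.ι_π_ne _ h, Pi.single_apply, Ne.symm h]

lemma vectorHom_repr_self [Semiring R] [Linear R C] {M : Type*} [AddCommMonoid M] [Module R M]
    (b : Module.Basis ι R M) (X : C) (i : ι) :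
    vectorHom X (b.repr (b i)) = biproduct.ι (fun _ : ι => X) i := by
  rw [b.repr_self, Finsupp.single_eq_pi_single, vectorHom_single]

variable [CommSemiring R] [Linear R C]

-- The transpose is forced by `f * g = g ≫ f` in `End`.
noncomputable def matrixEnd (X : C) : Matrix ι ι R →ₐ[R] End (⨁ fun _ : ι => X) where
  toFun M := biproduct.matrix fun j k => M k j • 𝟙 X
  map_one' := by
    refine biproduct.hom_ext' _ _ fun j => biproduct.hom_ext _ _ fun k => ?_
    by_cases h : j = k
    · subst h; simp [End.one_def]
    · simp [End.one_def, Matrix.one_apply_ne (Ne.symm h), biproduct.ι_π_ne _ h]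
  map_mul' M N := by
    refine biproduct.hom_ext' _ _ fun j => biproduct.hom_ext _ _ fun k => ?_
    simp [End.mul_def, biproduct.lift_desc, Matrix.mul_apply, Finset.sum_smul, smul_smul]
  map_zero' := by
    refine biproduct.hom_ext' _ _ fun j => biproduct.hom_ext _ _ fun k => ?_
    simp
  map_add' M N := by
    change _ = (biproduct.matrix fun j k => M k j • 𝟙 X) + biproduct.matrix fun j k => N k j • 𝟙 X
    refine biproduct.hom_ext' _ _ fun j => biproduct.hom_ext _ _ fun k => ?_
    simp [add_smul, Preadditive.add_comp, Preadditive.comp_add]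
  commutes' r := by
    change _ = r • 𝟙 (⨁ fun _ : ι => X)
    refine biproduct.hom_ext' _ _ fun j => biproduct.hom_ext _ _ fun k => ?_
    by_cases h : j = k
    · subst h; simp [Matrix.algebraMap_matrix_apply]
    · simp [Matrix.algebraMap_matrix_apply, Ne.symm h, biproduct.ι_π_ne _ h]

lemma matrixEnd_apply (X : C) (M : Matrix ι ι R) :
    (matrixEnd X M : (⨁ fun _ : ι => X) ⟶ _) = biproduct.matrix fun j k => M k j • 𝟙 X :=
  rfl

lemma vectorHom_comp_matrixEnd (X : C) (v : ι → R) (M : Matrix ι ι R) :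
    vectorHom X v ≫ matrixEnd X M = vectorHom X (M *ᵥ v) := by
  refine biproduct.hom_ext _ _ fun k => ?_
  simp [vectorHom, matrixEnd_apply, biproduct.lift_desc, Matrix.mulVec, dotProduct,
    Finset.sum_smul, smul_smul, mul_comm]

lemma vectorHom_repr_comp_matrixEnd_leftMulMatrix {S : Type*} [Semiring S] [Algebra R S]
    (b : Module.Basis ι R S) (X : C) (x s : S) :
    vectorHom X (b.repr x) ≫ matrixEnd X (Algebra.leftMulMatrix b s) =
      vectorHom X (b.repr (s * x)) := by
  rw [vectorHom_comp_matrixEnd, Algebra.leftMulMatrix_mulVec_repr]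

lemma matrixEnd_comp_desc {X Y : C} (M : Matrix ι ι R) (f : ι → (X ⟶ Y)) :
    matrixEnd X M ≫ biproduct.desc f = biproduct.desc fun j => ∑ k, M k j • f k := by
  simp [matrixEnd_apply, biproduct.matrix_desc]

lemma matrixEnd_comp_map {X Y : C} (M : Matrix ι ι R) (g : X ⟶ Y) :
    matrixEnd X M ≫ biproduct.map (fun _ => g) = biproduct.map (fun _ => g) ≫ matrixEnd Y M := by
  simp [matrixEnd_apply, biproduct.matrix_map, biproduct.map_matrix]

end MatrixAction

namespace BaseChange

attribute [local instance] Abelian.hasFiniteBiproducts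

variable {K L C}

abbrev forget : BaseChange K L C ⥤ C where
  obj X := X.obj
  map f := f.hom

instance : (forget : BaseChange K L C ⥤ C).Faithful :=
  ⟨fun h => hom_ext h⟩

lemma sum_smul_comp_str {ι : Type*} [Fintype ι] {X : C} {W : BaseChange K L C} (φ : X ⟶ W.obj)
    (c : ι → K) (e : ι → L) :
    ∑ k, c k • (φ ≫ (W.str (e k) : W.obj ⟶ W.obj)) =
      φ ≫ (W.str (∑ k, c k • e k) : W.obj ⟶ W.obj) := by
  simp only [map_sum, map_smul]
  exact (Finset.sum_congr rfl fun k _ => (Linear.comp_smul _ _ _ _ _ _).symm).trans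
    (Preadditive.comp_sum _ _ _).symm

variable {ι : Type} [Fintype ι] [DecidableEq ι] (b : Module.Basis ι K L)

lemma matrixEnd_leftMulMatrix_comp_desc {X : C} {W : BaseChange K L C} (φ : X ⟶ W.obj) (l : L) :
    matrixEnd X (Algebra.leftMulMatrix b l) ≫
        biproduct.desc (fun i => φ ≫ (W.str (b i) : W.obj ⟶ W.obj)) =
      biproduct.desc (fun i => φ ≫ (W.str (b i) : W.obj ⟶ W.obj)) ≫
        (W.str l : W.obj ⟶ W.obj) := by
  refine biproduct.hom_ext' _ _ fun j => ?_
  simp only [matrixEnd_comp_desc, biproduct.ι_desc, biproduct.ι_desc_assoc,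
    Algebra.leftMulMatrix_eq_repr_mul, sum_smul_comp_str, b.sum_repr, map_mul, Category.assoc]
  rfl

-- Reducible (like `forget`), so that rewriting sees `((extendScalars b).obj X).obj` as a biproduct.
noncomputable abbrev extendScalars : C ⥤ BaseChange K L C where
  obj X := ⟨⨁ fun _ : ι => X, (matrixEnd X).comp (Algebra.leftMulMatrix b)⟩
  map g := ⟨biproduct.map fun _ => g, fun _ => matrixEnd_comp_map _ g⟩

@[simps]
noncomputable def extendScalarsHomEquiv (X : C) (W : BaseChange K L C) :
    ((extendScalars b).obj X ⟶ W) ≃ (X ⟶ forget.obj W) where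
  toFun f := vectorHom X (b.repr 1) ≫ f.hom
  invFun φ := ⟨biproduct.desc fun i => φ ≫ W.str (b i), matrixEnd_leftMulMatrix_comp_desc b φ⟩
  left_inv f := by
    ext : 1
    refine biproduct.hom_ext' _ _ fun i => ?_
    have h : vectorHom X (b.repr 1) ≫ matrixEnd X (Algebra.leftMulMatrix b (b i)) =
        biproduct.ι (fun _ : ι => X) i := by
      rw [vectorHom_repr_comp_matrixEnd_leftMulMatrix, mul_one, vectorHom_repr_self]
    rw [biproduct.ι_desc, ← h]
    simp only [Category.assoc]
    exact congrArg _ (f.comm (b i)).symm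
  right_inv φ := by
    simp only [vectorHom_comp_desc, sum_smul_comp_str, b.sum_repr, map_one]
    exact Category.comp_id φ

noncomputable def extendScalarsForgetAdjunction :
    extendScalars b ⊣ (forget : BaseChange K L C ⥤ C) :=
  Adjunction.mkOfHomEquiv
    { homEquiv := extendScalarsHomEquiv b
      homEquiv_naturality_left_symm := fun f g => by
        ext : 1
        refine biproduct.hom_ext' _ _ fun j => ?_
        change biproduct.ι (fun _ : ι => _) j ≫ biproduct.desc _ =
          biproduct.ι (fun _ : ι => _) j ≫ biproduct.map (fun _ => f) ≫ biproduct.desc _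
        simp
      homEquiv_naturality_right := fun f g => (Category.assoc _ _ _).symm }

lemma extendScalarsForgetAdjunction_unit_app (X : C) :
    (extendScalarsForgetAdjunction b).unit.app X = vectorHom X (b.repr 1) :=
  Category.comp_id _

instance (X : C) : Mono ((extendScalarsForgetAdjunction b).unit.app X) := by
  have hne : ⇑(b.repr 1) ≠ 0 :=
    Finsupp.coe_eq_zero.not.mpr (b.repr.map_ne_zero_iff.mpr one_ne_zero)
  have := isSplitMono_vectorHom X hne
  rw [extendScalarsForgetAdjunction_unit_app]
  infer_instance

instance : (extendScalars b : C ⥤ BaseChange K L C).Faithful :=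
  (extendScalarsForgetAdjunction b).faithful_L_of_mono_unit_app

instance : (extendScalars b : C ⥤ BaseChange K L C).PreservesMonomorphisms :=
  ⟨fun g _ => forget.mono_of_mono_map (inferInstanceAs (Mono (biproduct.map fun _ => g)))⟩

end BaseChange

/-- **Statement 12.** For a finite field extension `L/K` and a `K`-linear abelian category
`C`: if the base change category `C_L` has enough injectives, then so does `C`. -/
theorem enoughInjectives_of_baseChange
    (K : Type*) [Field K] (L : Type*) [Field L] [Algebra K L] [FiniteDimensional K L]
    (C : Type u) [Category.{v} C] [Abelian C] [Linear K C]
    (h : EnoughInjectives (BaseChange K L C)) : EnoughInjectives C :=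
  EnoughInjectives.of_adjunction (extendScalarsForgetAdjunction (Module.finBasis K L))
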